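/- arXiv:2509.16759 — 11 statements merged into one kernel-verified Lean document; each statement's English description precedes it below -/
import Mathlib

section
/- Every torsion-free group satisfying property (N) is Frobenius injective; that is, if G is a group whose only element of finite order is the identity, and for every x ∈ G, every finite subset S ⊆ G and every integer n ≥ 1 the condition x^n ∈ Z(S) implies x ∈ Z(S), then for every integer k ≥ 1 the power map x ↦ x^k on G is injective. -/
/-! If `a ^ k = b ^ k`, then `a ^ k` commutes with `b`, so property (N) applied to `S = {b}` makes
`a` and `b` commute. Then `(a * b⁻¹) ^ k = a ^ k * (b ^ k)⁻¹ = 1`, and torsion-freeness gives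
`a = b`. -/

theorem Commute.isOfFinOrder_mul_inv_of_pow_eq {G : Type*} [Group G] {a b : G}
    (hab : Commute a b) {k : ℕ} (hk : k ≠ 0) (hpow : a ^ k = b ^ k) :
    IsOfFinOrder (a * b⁻¹) :=
  isOfFinOrder_iff_pow_eq_one.mpr
    ⟨k, Nat.pos_of_ne_zero hk, by rw [hab.inv_right.mul_pow, hpow, inv_pow, mul_inv_cancel]⟩

theorem pow_mem_centralizer_singleton_of_pow_eq {G : Type*} [Group G] {a b : G} {k : ℕ}
    (hpow : a ^ k = b ^ k) : a ^ k ∈ Subgroup.centralizer {b} :=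
  Subgroup.mem_centralizer_singleton_iff.mpr (hpow ▸ (Commute.self_pow b k).symm.eq)

/-- Every torsion-free group satisfying property (N) is Frobenius injective. -/
theorem torsionFree_propertyN_frobenius_injective (G : Type*) [Group G]
    (htf : ∀ g : G, IsOfFinOrder g → g = 1)
    (hN : ∀ (x : G) (S : Finset G) (n : ℕ), 1 ≤ n →
      x ^ n ∈ Subgroup.centralizer (S : Set G) → x ∈ Subgroup.centralizer (S : Set G))
    (k : ℕ) (hk : 1 ≤ k) :
    Function.Injective (fun x : G => x ^ k) := by
  intro a b (hpow : a ^ k = b ^ k)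
  have hcomm : Commute a b := Subgroup.mem_centralizer_singleton_iff.mp <| by
    simpa using hN a {b} k hk (by simpa using pow_mem_centralizer_singleton_of_pow_eq hpow)
  exact mul_inv_eq_one.mp (htf _ (hcomm.isOfFinOrder_mul_inv_of_pow_eq (by omega) hpow))
end

section
/- Every torsion-free nilpotent group satisfies property (N): if G is a nilpotent group whose only element of finite order is the identity, then for every x ∈ G, every finite subset S ⊆ G and every integer n ≥ 1, x^n ∈ Z(S) implies x ∈ Z(S). -/
open scoped commutatorElement

/-- If `⁅a,b⁆` is central, then `⁅a^k, b⁆ = ⁅a,b⁆^k`. -/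
lemma commutator_pow_left_of_center {H : Type*} [Group H] (a b : H)
    (hc : ⁅a, b⁆ ∈ Subgroup.center H) : ∀ k : ℕ, ⁅a ^ k, b⁆ = ⁅a, b⁆ ^ k := by
  intro k
  induction k with
  | zero => simp
  | succ k ih =>
    have key : ⁅a ^ (k + 1), b⁆ = a * ⁅a ^ k, b⁆ * a⁻¹ * ⁅a, b⁆ := by
      rw [pow_succ']
      simp only [commutatorElement_def]
      group
    rw [key, ih]
    have hcp : ⁅a, b⁆ ^ k ∈ Subgroup.center H := Subgroup.pow_mem _ hc k
    have : a * ⁅a, b⁆ ^ k * a⁻¹ = ⁅a, b⁆ ^ k := by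
      rw [Subgroup.mem_center_iff.mp hcp a]
      group
    rw [this, pow_succ']
    rw [Subgroup.mem_center_iff.mp hcp ⁅a, b⁆]

/-- Key step: modulo a normal subgroup `N`, if `⁅a,b⁆` is central mod `N` and
`⁅a^n, b⁆ ∈ N`, then `⁅a,b⁆^n ∈ N`. -/
lemma commutator_pow_mem_of_pow_commutator {G : Type*} [Group G] (N : Subgroup G) [N.Normal]
    (a b : G) (hcen : ∀ z : G, ⁅⁅a, b⁆, z⁆ ∈ N) (n : ℕ) (hab : ⁅a ^ n, b⁆ ∈ N) :
    ⁅a, b⁆ ^ n ∈ N := by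
  let π : G →* G ⧸ N := QuotientGroup.mk' N
  have hπ : Function.Surjective π := QuotientGroup.mk'_surjective N
  have hcent : ⁅π a, π b⁆ ∈ Subgroup.center (G ⧸ N) := by
    rw [Subgroup.mem_center_iff]
    intro q
    obtain ⟨z, rfl⟩ := hπ q
    have : π ⁅⁅a, b⁆, z⁆ = 1 := (QuotientGroup.eq_one_iff _).mpr (hcen z)
    rw [map_commutatorElement, map_commutatorElement] at this
    have := commutatorElement_eq_one_iff_mul_comm.mp this
    exact this.symm
  have h1 : π (⁅a, b⁆ ^ n) = 1 := by
    rw [map_pow, map_commutatorElement, ← commutator_pow_left_of_center _ _ hcent n,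
      ← map_pow, ← map_commutatorElement]
    exact (QuotientGroup.eq_one_iff _).mpr hab
  exact (QuotientGroup.eq_one_iff _).mp h1

/-- In a torsion-free group, upper central series terms are "isolated" one step up. -/
lemma upperCentralSeries_isolated {G : Type*} [Group G]
    (htf : ∀ g : G, IsOfFinOrder g → g = 1) :
    ∀ j : ℕ, ∀ g : G, ∀ n : ℕ, 1 ≤ n → g ∈ Subgroup.upperCentralSeries G (j + 1) →
      g ^ n ∈ Subgroup.upperCentralSeries G j → g ∈ Subgroup.upperCentralSeries G j := by
  intro j
  induction j with
  | zero =>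
    intro g n hn _ hgn
    rw [Subgroup.upperCentralSeries_zero, Subgroup.mem_bot] at hgn ⊢
    exact htf g (isOfFinOrder_iff_pow_eq_one.mpr ⟨n, by omega, hgn⟩)
  | succ j ih =>
    intro g n hn hg hgn
    rw [Subgroup.mem_upperCentralSeries_succ_iff] at hg hgn ⊢
    intro y
    have he : ⁅g, y⁆ ∈ Subgroup.upperCentralSeries G (j + 1) := by
      simpa [commutatorElement_def] using hg y
    have hcen : ∀ z : G, ⁅⁅g, y⁆, z⁆ ∈ Subgroup.upperCentralSeries G j := by
      intro z
      have := (Subgroup.mem_upperCentralSeries_succ_iff.mp he) z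
      simpa [commutatorElement_def] using this
    have hab : ⁅g ^ n, y⁆ ∈ Subgroup.upperCentralSeries G j := by
      simpa [commutatorElement_def] using hgn y
    have hpow : ⁅g, y⁆ ^ n ∈ Subgroup.upperCentralSeries G j :=
      commutator_pow_mem_of_pow_commutator _ g y hcen n hab
    have := ih ⁅g, y⁆ n hn he hpow
    simpa [commutatorElement_def] using this

/-- Every torsion-free nilpotent group satisfies property (N). -/
theorem torsionFree_nilpotent_propertyN (G : Type*) [Group G] [Group.IsNilpotent G]
    (htf : ∀ g : G, IsOfFinOrder g → g = 1)
    (x : G) (S : Finset G) (n : ℕ) (hn : 1 ≤ n)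
    (h : x ^ n ∈ Subgroup.centralizer (S : Set G)) :
    x ∈ Subgroup.centralizer (S : Set G) := by
  rw [Subgroup.mem_centralizer_iff] at h ⊢
  intro y hy
  have hxn : y * x ^ n = x ^ n * y := h y hy
  have hc1 : ⁅x ^ n, y⁆ = 1 := commutatorElement_eq_one_iff_mul_comm.mpr hxn.symm
  -- descend the commutator down the upper central series
  have key : ∀ j : ℕ, ⁅x, y⁆ ∈ Subgroup.upperCentralSeries G j → ⁅x, y⁆ = 1 := by
    intro j
    induction j with
    | zero =>
      intro hj
      rwa [Subgroup.upperCentralSeries_zero, Subgroup.mem_bot] at hj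
    | succ j ih =>
      intro hj
      have hcen : ∀ z : G, ⁅⁅x, y⁆, z⁆ ∈ Subgroup.upperCentralSeries G j := by
        intro z
        have := (Subgroup.mem_upperCentralSeries_succ_iff.mp hj) z
        simpa [commutatorElement_def] using this
      have hab : ⁅x ^ n, y⁆ ∈ Subgroup.upperCentralSeries G j := by
        rw [hc1]; exact Subgroup.one_mem _
      have hpow : ⁅x, y⁆ ^ n ∈ Subgroup.upperCentralSeries G j :=
        commutator_pow_mem_of_pow_commutator _ x y hcen n hab
      exact ih (upperCentralSeries_isolated htf j ⁅x, y⁆ n hn hj hpow)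
  obtain ⟨c, hc⟩ := Group.IsNilpotent.nilpotent (G := G)
  have : ⁅x, y⁆ = 1 := key c (hc ▸ Subgroup.mem_top _)
  have := commutatorElement_eq_one_iff_mul_comm.mp this
  exact this.symm
end

section
/- Every torsion-free nilpotent group is Frobenius injective: if G is a nilpotent group whose only element of finite order is the identity, then for every integer k ≥ 1 the power map x ↦ x^k on G is injective (equivalently, x^k = y^k implies x = y). -/
section Aux

variable {G : Type*} [Group G]

/-- If the commutator of `a` and `b` is central, then `a^m * b * a^-m * b⁻¹ = ⁅a,b⁆^m`. -/
lemma aux_pow_comm (a b : G) (hc : a * b * a⁻¹ * b⁻¹ ∈ Subgroup.center G) (m : ℕ) :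
    a ^ m * b * (a ^ m)⁻¹ * b⁻¹ = (a * b * a⁻¹ * b⁻¹) ^ m := by
  induction m with
  | zero => simp
  | succ n ih =>
    have hcen := Subgroup.mem_center_iff.mp hc
    have hpow : (a * b * a⁻¹ * b⁻¹) ^ n ∈ Subgroup.center G := pow_mem hc n
    have hcenp := Subgroup.mem_center_iff.mp hpow
    calc a ^ (n+1) * b * (a ^ (n+1))⁻¹ * b⁻¹
        = a * (a ^ n * b * (a ^ n)⁻¹ * b⁻¹) * (b * a⁻¹ * b⁻¹) := by
          rw [pow_succ']; group
      _ = a * (a * b * a⁻¹ * b⁻¹) ^ n * (b * a⁻¹ * b⁻¹) := by rw [ih]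
      _ = (a * b * a⁻¹ * b⁻¹) ^ n * (a * b * a⁻¹ * b⁻¹) := by
          rw [hcenp a, mul_assoc]; congr 1; group
      _ = (a * b * a⁻¹ * b⁻¹) ^ (n+1) := by rw [pow_succ]

/-- Elements of the `(i+1)`-st upper central term are central modulo the `i`-th term. -/
lemma aux_central_mod {i : ℕ} {z : G} (hz : z ∈ Subgroup.upperCentralSeries G (i + 1)) :
    (QuotientGroup.mk' (Subgroup.upperCentralSeries G i)) z
      ∈ Subgroup.center (G ⧸ Subgroup.upperCentralSeries G i) := by
  rw [Subgroup.mem_center_iff]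
  intro q
  obtain ⟨g, rfl⟩ := QuotientGroup.mk'_surjective _ q
  rw [← map_mul, ← map_mul]
  apply QuotientGroup.eq.mpr
  have h := Subgroup.mem_upperCentralSeries_succ_iff.mp hz g⁻¹
  have h2 := (inferInstance : (Subgroup.upperCentralSeries G i).Normal).conj_mem _ (inv_mem h) z⁻¹
  have : (g * z)⁻¹ * (z * g) = z⁻¹ * (z * g⁻¹ * z⁻¹ * g⁻¹⁻¹)⁻¹ * z⁻¹⁻¹ := by group
  rw [this]
  exact h2

/-- Torsion-freeness of the upper central factors. -/
lemma aux_tf (htf : ∀ g : G, IsOfFinOrder g → g = 1) :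
    ∀ i : ℕ, ∀ g : G, ∀ m : ℕ, 1 ≤ m → g ∈ Subgroup.upperCentralSeries G (i + 1) →
      g ^ m ∈ Subgroup.upperCentralSeries G i → g ∈ Subgroup.upperCentralSeries G i := by
  intro i
  induction i with
  | zero =>
    intro g m hm hg hgm
    rw [Subgroup.upperCentralSeries_zero, Subgroup.mem_bot] at hgm ⊢
    exact htf g (isOfFinOrder_iff_pow_eq_one.mpr ⟨m, hm, hgm⟩)
  | succ i ih =>
    intro g m hm hg hgm
    rw [Subgroup.mem_upperCentralSeries_succ_iff]
    intro h
    -- work in G / ζ i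
    set H := Subgroup.upperCentralSeries G i with hH
    set π := QuotientGroup.mk' H with hπ
    have hcomm : g * h * g⁻¹ * h⁻¹ ∈ Subgroup.upperCentralSeries G (i + 1) :=
      Subgroup.mem_upperCentralSeries_succ_iff.mp hg h
    apply ih _ m hm hcomm
    -- show (g*h*g⁻¹*h⁻¹)^m ∈ H, i.e. π of it is 1
    apply (QuotientGroup.eq_one_iff _).mp
    show (π ((g * h * g⁻¹ * h⁻¹) ^ m) : G ⧸ H) = 1
    have hc : π g * π h * (π g)⁻¹ * (π h)⁻¹ ∈ Subgroup.center (G ⧸ H) := by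
      have := aux_central_mod (G := G) (i := i) hcomm
      simpa [map_mul, hπ] using this
    have key := aux_pow_comm (π g) (π h) hc m
    have hgm1 : (π g) ^ m * π h * ((π g) ^ m)⁻¹ * (π h)⁻¹ = 1 := by
      have hmem := Subgroup.mem_upperCentralSeries_succ_iff.mp hgm h
      have : π (g ^ m * h * (g ^ m)⁻¹ * h⁻¹) = 1 :=
        (QuotientGroup.eq_one_iff _).mpr hmem
      simpa [map_mul, map_pow] using this
    have : ((π g * π h * (π g)⁻¹ * (π h)⁻¹) : G ⧸ H) ^ m = 1 := by
      rw [← key, hgm1]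
    calc (π ((g * h * g⁻¹ * h⁻¹) ^ m) : G ⧸ H)
        = (π g * π h * (π g)⁻¹ * (π h)⁻¹) ^ m := by simp [map_mul, map_pow]
      _ = 1 := this

end Aux

/-- Every torsion-free nilpotent group is Frobenius injective. -/
theorem torsionFree_nilpotent_frobenius_injective (G : Type*) [Group G] [Group.IsNilpotent G]
    (htf : ∀ g : G, IsOfFinOrder g → g = 1)
    (k : ℕ) (hk : 1 ≤ k) :
    Function.Injective (fun x : G => x ^ k) := by
  intro x y hxy
  simp only at hxy
  -- show z := x⁻¹ * y is in every upper central term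
  set z := x⁻¹ * y with hz
  have descent : ∀ i : ℕ, z ∈ Subgroup.upperCentralSeries G i → z ∈ Subgroup.upperCentralSeries G 0 := by
    intro i
    induction i with
    | zero => exact fun h => h
    | succ i ih =>
      intro hmem
      apply ih
      apply aux_tf htf i z k hk hmem
      -- z^k ∈ ζ i : use quotient
      set H := Subgroup.upperCentralSeries G i with hH
      set π := QuotientGroup.mk' H with hπ
      apply (QuotientGroup.eq_one_iff _).mp
      show (π (z ^ k) : G ⧸ H) = 1
      have hcen : π z ∈ Subgroup.center (G ⧸ H) := aux_central_mod hmem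
      have hcomm : Commute (π x) (π z) :=
        Subgroup.mem_center_iff.mp hcen (π x)
      have hxz : x * z = y := by rw [hz]; group
      have : (π x * π z) ^ k = (π x) ^ k := by
        rw [← map_mul, hxz, ← map_pow, ← map_pow, ← hxy]
      rw [hcomm.mul_pow, mul_eq_left] at this
      rw [map_pow]
      exact this
  have hz1 : z ∈ Subgroup.upperCentralSeries G 0 := by
    apply descent (Group.nilpotencyClass G)
    rw [Subgroup.upperCentralSeries_nilpotencyClass]
    trivial
  rw [Subgroup.upperCentralSeries_zero, Subgroup.mem_bot] at hz1
  rw [hz, inv_mul_eq_one] at hz1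
  exact hz1
end

section
/- Let G be a torsion-free group in which the centralizer Z(a) of every nontrivial element a is a cyclic group. Then for all nontrivial a, b ∈ G, either Z(a) = Z(b) or Z(a) ∩ Z(b) = {1}. -/
/-!
If Z(x) is abelian and y ∈ Z(x), then Z(x) ≤ Z(Z(x)) ≤ Z(y); so nontrivial commuting elements
have equal centralizers. A nontrivial c ∈ Z(a) ∩ Z(b) then gives Z(a) = Z(c) = Z(b).
-/

namespace Subgroup

variable {G : Type*} [Group G]

theorem centralizer_le_centralizer_of_mem {x y : G} [IsMulCommutative (centralizer ({x} : Set G))]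
    (hy : y ∈ centralizer ({x} : Set G)) :
    centralizer ({x} : Set G) ≤ centralizer ({y} : Set G) :=
  (le_centralizer _).trans (centralizer_le (Set.singleton_subset_iff.mpr hy))

theorem mem_centralizer_singleton_comm {x y : G} :
    y ∈ centralizer ({x} : Set G) ↔ x ∈ centralizer ({y} : Set G) := by
  simp only [mem_centralizer_singleton_iff, eq_comm]

theorem centralizer_eq_of_mem
    (hcomm : ∀ x : G, x ≠ 1 → IsMulCommutative (centralizer ({x} : Set G)))
    {x y : G} (hx : x ≠ 1) (hy : y ≠ 1) (hxy : y ∈ centralizer ({x} : Set G)) :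
    centralizer ({x} : Set G) = centralizer ({y} : Set G) :=
  have := hcomm x hx
  have := hcomm y hy
  le_antisymm (centralizer_le_centralizer_of_mem hxy)
    (centralizer_le_centralizer_of_mem (mem_centralizer_singleton_comm.mp hxy))

theorem centralizer_eq_or_inf_eq_bot
    (hcomm : ∀ x : G, x ≠ 1 → IsMulCommutative (centralizer ({x} : Set G)))
    {a b : G} (ha : a ≠ 1) (hb : b ≠ 1) :
    centralizer ({a} : Set G) = centralizer ({b} : Set G) ∨
      centralizer ({a} : Set G) ⊓ centralizer ({b} : Set G) = ⊥ := by
  refine or_iff_not_imp_right.mpr fun hne => ?_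
  obtain ⟨c, hc, hc1⟩ : ∃ c ∈ centralizer ({a} : Set G) ⊓ centralizer ({b} : Set G), c ≠ 1 := by
    simpa only [eq_bot_iff_forall, not_forall, exists_prop] using hne
  obtain ⟨hca, hcb⟩ := mem_inf.mp hc
  calc centralizer ({a} : Set G)
      = centralizer ({c} : Set G) := centralizer_eq_of_mem hcomm ha hc1 hca
    _ = centralizer ({b} : Set G) := (centralizer_eq_of_mem hcomm hb hc1 hcb).symm

end Subgroup

theorem centralizers_eq_or_inter_trivial_general (G : Type*) [Group G]
    (hcyc : ∀ a : G, a ≠ 1 → IsCyclic (Subgroup.centralizer ({a} : Set G)))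
    (a b : G) (ha : a ≠ 1) (hb : b ≠ 1) :
    Subgroup.centralizer ({a} : Set G) = Subgroup.centralizer ({b} : Set G) ∨
      Subgroup.centralizer ({a} : Set G) ⊓ Subgroup.centralizer ({b} : Set G) = ⊥ :=
  Subgroup.centralizer_eq_or_inf_eq_bot (fun x hx => have := hcyc x hx; inferInstance) ha hb

/-- In a torsion-free group with cyclic centralizers of nontrivial elements,
two centralizers of nontrivial elements either coincide or intersect trivially. -/
theorem centralizers_eq_or_inter_trivial (G : Type*) [Group G]
    (htf : ∀ g : G, IsOfFinOrder g → g = 1)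
    (hcyc : ∀ a : G, a ≠ 1 → IsCyclic (Subgroup.centralizer ({a} : Set G)))
    (a b : G) (ha : a ≠ 1) (hb : b ≠ 1) :
    Subgroup.centralizer ({a} : Set G) = Subgroup.centralizer ({b} : Set G) ∨
      Subgroup.centralizer ({a} : Set G) ⊓ Subgroup.centralizer ({b} : Set G) = ⊥ :=
  centralizers_eq_or_inter_trivial_general G hcyc a b ha hb
end

section
/- Let G be a torsion-free group in which the centralizer Z(a) of every nontrivial element a is a cyclic group. Then G satisfies property (N): for every x ∈ G, every finite subset S ⊆ G and every integer n ≥ 1, x^n ∈ Z(S) implies x ∈ Z(S). -/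
/-!
If `x ^ n ∈ Z(S)` with `x ≠ 1`, then `x ^ n ≠ 1` by torsion-freeness, and both `x` and every
`s ∈ S` lie in `Z(x ^ n)`. That centralizer is cyclic, hence abelian, so `x` commutes with `s`.
-/

section

open Subgroup

variable {G : Type*} [Group G]

theorem Commute.of_commute_of_isMulCommutative_centralizer {a x y : G}
    [IsMulCommutative (centralizer ({a} : Set G))] (hx : Commute x a) (hy : Commute y a) :
    Commute x y :=
  setLike_mul_comm (mem_centralizer_singleton_iff.2 hx.eq) (mem_centralizer_singleton_iff.2 hy.eq)

theorem pow_ne_one_of_torsionFree (htf : ∀ g : G, IsOfFinOrder g → g = 1) {x : G} (hx : x ≠ 1)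
    {n : ℕ} (hn : n ≠ 0) : x ^ n ≠ 1 :=
  fun hxn ↦ hx <| htf x <| isOfFinOrder_iff_pow_eq_one.2 ⟨n, Nat.pos_of_ne_zero hn, hxn⟩

end

/-- A torsion-free group with cyclic centralizers of nontrivial elements
satisfies property (N). -/
theorem cyclic_centralizers_propertyN (G : Type*) [Group G]
    (htf : ∀ g : G, IsOfFinOrder g → g = 1)
    (hcyc : ∀ a : G, a ≠ 1 → IsCyclic (Subgroup.centralizer ({a} : Set G)))
    (x : G) (S : Finset G) (n : ℕ) (hn : 1 ≤ n)
    (h : x ^ n ∈ Subgroup.centralizer (S : Set G)) :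
    x ∈ Subgroup.centralizer (S : Set G) := by
  rcases eq_or_ne x 1 with rfl | hx
  · exact one_mem _
  have := hcyc (x ^ n) (pow_ne_one_of_torsionFree htf hx (Nat.one_le_iff_ne_zero.1 hn))
  refine Subgroup.mem_centralizer_iff.2 fun s hs ↦ ?_
  have hs_comm : Commute s (x ^ n) := Subgroup.mem_centralizer_iff.1 h s hs
  exact (hs_comm.of_commute_of_isMulCommutative_centralizer (Commute.self_pow x n)).eq
end

section
/- Let π be a Frobenius injective group, let x, y ∈ π, and let S ⊆ π be a finite nonempty subset such that x γ y⁻¹ ∈ S for every γ ∈ S. Then x γ y⁻¹ = γ for every γ ∈ S. -/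
/-!
Since `γ ↦ x * γ * y⁻¹` is injective and maps the finite set `S` into itself, every
`γ ∈ S` is periodic: `x ^ n * γ * (y ^ n)⁻¹ = γ` for some `n ≥ 1`. Then `γ⁻¹ * x * γ` and `y`
have the same `n`-th power, so they are equal by Frobenius injectivity.
-/

open Function Set

theorem Set.MapsTo.exists_pos_iterate_eq_of_finite {α : Type*} {f : α → α} {s : Set α}
    (hs : s.Finite) (hf : InjOn f s) (h : MapsTo f s s) {a : α} (ha : a ∈ s) :
    ∃ n, 0 < n ∧ f^[n] a = a := by
  have : Finite s := hs
  obtain ⟨n, hn, hper⟩ := (h.restrict_inj.mpr hf).mem_periodicPts ⟨a, ha⟩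
  refine ⟨n, hn, ?_⟩
  simpa [h.iterate_restrict, Subtype.ext_iff] using hper.eq

section Group

variable {G : Type*} [Group G]

theorem mul_mul_inv_iterate (x y γ : G) (n : ℕ) :
    (fun g => x * g * y⁻¹)^[n] γ = x ^ n * γ * (y ^ n)⁻¹ := by
  induction n with
  | zero => simp
  | succ n ih =>
    rw [iterate_succ_apply', ih, pow_succ', pow_succ]
    group

theorem mul_eq_mul_of_pow_mul_eq_mul_pow {x y γ : G} {k : ℕ}
    (hk : Injective (fun g : G => g ^ k)) (h : x ^ k * γ = γ * y ^ k) : x * γ = γ * y := by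
  have hconj : (γ⁻¹ * x * γ) ^ k = y ^ k :=
    calc (γ⁻¹ * x * γ) ^ k = γ⁻¹ * x ^ k * γ := by simpa using conj_pow (a := γ⁻¹) (b := x)
      _ = y ^ k := by rw [mul_assoc, h, inv_mul_cancel_left]
  rw [← hk hconj]
  group

end Group

theorem frobenius_injective_fixes_finite_invariant_set_general {π : Type*} [Group π]
    (hFI : ∀ k : ℕ, 1 ≤ k → Function.Injective (fun x : π => x ^ k))
    (x y : π) (S : Finset π)
    (hmaps : ∀ γ ∈ S, x * γ * y⁻¹ ∈ S) :
    ∀ γ ∈ S, x * γ * y⁻¹ = γ := by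
  intro γ hγ
  have hinj : InjOn (fun g => x * g * y⁻¹) S := fun _ _ _ _ h => by simpa using h
  obtain ⟨n, hn, hper⟩ :=
    MapsTo.exists_pos_iterate_eq_of_finite S.finite_toSet hinj hmaps hγ
  rw [mul_mul_inv_iterate, mul_inv_eq_iff_eq_mul] at hper
  rw [mul_eq_mul_of_pow_mul_eq_mul_pow (hFI n hn) hper, mul_inv_cancel_right]

/-- In a Frobenius injective group π, if `(x, y)` maps a finite nonempty subset `S`
of π into itself under the action `(x, y)·γ = x * γ * y⁻¹`, then it fixes each
element of `S`. -/
theorem frobenius_injective_fixes_finite_invariant_set {π : Type*} [Group π]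
    (hFI : ∀ k : ℕ, 1 ≤ k → Function.Injective (fun x : π => x ^ k))
    (x y : π) (S : Finset π) (hS : S.Nonempty)
    (hmaps : ∀ γ ∈ S, x * γ * y⁻¹ ∈ S) :
    ∀ γ ∈ S, x * γ * y⁻¹ = γ :=
  frobenius_injective_fixes_finite_invariant_set_general hFI x y S hmaps
end

section
/- Let π be a Frobenius injective group equipped with the action of π × π on π given by (a, b)·γ = a γ b⁻¹, and let S ⊆ π be a finite nonempty subset. Then the setwise stabilizer of S equals the pointwise stabilizer: {(a, b) ∈ π × π : aSb⁻¹ = S} = ⋂_{γ ∈ S} {(a, b) ∈ π × π : a γ b⁻¹ = γ}. -/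
/-!
If `a S b⁻¹ = S` for a finite `S`, then `γ ↦ a γ b⁻¹` permutes `S`, so every `γ ∈ S` is a
periodic point: `a ^ n * γ * (b ^ n)⁻¹ = γ` for some `n ≥ 1`. This says
`a ^ n = (γ b γ⁻¹) ^ n`, and injectivity of the `n`-th power map gives `a = γ b γ⁻¹`,
that is `a γ b⁻¹ = γ`.
-/

open Function Set

theorem Set.MapsTo.exists_pos_iterate_eq_self {α : Type*} {f : α → α} {s : Set α}
    (hs : s.Finite) (hf : MapsTo f s s) (hinj : InjOn f s) {x : α} (hx : x ∈ s) :
    ∃ n > 0, f^[n] x = x := by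
  have : Finite s := hs.to_subtype
  obtain ⟨n, hn, hper⟩ := mem_periodicPts.mp ((hf.restrict_inj.mpr hinj).mem_periodicPts ⟨x, hx⟩)
  exact ⟨n, hn, by simpa only [hf.coe_iterate_restrict] using congrArg Subtype.val hper.eq⟩

section Group

variable {G : Type*} [Group G]

theorem iterate_mul_mul_inv (a b γ : G) (n : ℕ) :
    (fun x => a * x * b⁻¹)^[n] γ = a ^ n * γ * (b ^ n)⁻¹ := by
  induction n with
  | zero => simp
  | succ n ih => rw [iterate_succ_apply', ih, pow_succ', pow_succ]; group

theorem mul_mul_inv_eq_self_of_pow {n : ℕ} (hn : Injective fun x : G => x ^ n) {a b γ : G}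
    (h : a ^ n * γ * (b ^ n)⁻¹ = γ) : a * γ * b⁻¹ = γ := by
  have hpow : a ^ n = (γ * b * γ⁻¹) ^ n := by
    rw [conj_pow, ← mul_inv_eq_iff_eq_mul.mp h, mul_inv_cancel_right]
  rw [hn hpow]; group

end Group

theorem frobenius_injective_setwise_eq_pointwise_stabilizer_general {π : Type*} [Group π]
    (hFI : ∀ k : ℕ, 1 ≤ k → Function.Injective (fun x : π => x ^ k))
    (S : Finset π) :
    {p : π × π | (fun γ : π => p.1 * γ * p.2⁻¹) '' (S : Set π) = (S : Set π)} =
      ⋂ γ ∈ (S : Set π), {p : π × π | p.1 * γ * p.2⁻¹ = γ} := by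
  ext ⟨a, b⟩
  simp only [mem_iInter]
  constructor
  · intro h γ hγ
    have hmaps : MapsTo (fun x => a * x * b⁻¹) S S := mapsTo_iff_image_subset.mpr h.subset
    have hinj : Injective fun x : π => a * x * b⁻¹ :=
      (mul_left_injective b⁻¹).comp (mul_right_injective a)
    obtain ⟨n, hn, hper⟩ := hmaps.exists_pos_iterate_eq_self S.finite_toSet hinj.injOn hγ
    rw [iterate_mul_mul_inv] at hper
    exact mul_mul_inv_eq_self_of_pow (hFI n hn) hper
  · exact EqOn.image_eq_self

/-- For a Frobenius injective group π with the action of π × π on π given by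
`(a, b)·γ = a * γ * b⁻¹`, the setwise stabilizer of a finite nonempty subset `S`
equals the pointwise stabilizer. -/
theorem frobenius_injective_setwise_eq_pointwise_stabilizer {π : Type*} [Group π]
    (hFI : ∀ k : ℕ, 1 ≤ k → Function.Injective (fun x : π => x ^ k))
    (S : Finset π) (hS : S.Nonempty) :
    {p : π × π | (fun γ : π => p.1 * γ * p.2⁻¹) '' (S : Set π) = (S : Set π)} =
      ⋂ γ ∈ (S : Set π), {p : π × π | p.1 * γ * p.2⁻¹ = γ} :=
  frobenius_injective_setwise_eq_pointwise_stabilizer_general hFI S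
end

section
/- In the presented group G = ⟨a, b ∣ a² = b²⟩ (the fundamental group of the Klein bottle), the images of the generators satisfy a² = b² but a ≠ b. Hence G is not Frobenius injective: the Frobenius map x ↦ x² on G is not injective. -/
/-- The single relation `a² = b²` defining the fundamental group of the Klein bottle,
as an element of the free group on two generators (`true` plays the role of `a`,
`false` that of `b`). -/
def kleinBottleRels : Set (FreeGroup Bool) :=
  {FreeGroup.of true ^ 2 * (FreeGroup.of false ^ 2)⁻¹}

/-! The two generators have equal squares by the defining relation, and are told apart by the
character to `ℤ/2` sending `a ↦ 1` and `b ↦ 0`, which respects `a² = b²` since both sides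
map to `0`. -/

theorem kleinBottle_of_true_sq_eq_of_false_sq :
    (PresentedGroup.of (rels := kleinBottleRels) true) ^ 2 =
      (PresentedGroup.of (rels := kleinBottleRels) false) ^ 2 := by
  simpa only [PresentedGroup.of, map_pow] using
    PresentedGroup.mk_eq_mk_of_mul_inv_mem (rels := kleinBottleRels) rfl

def kleinBottleGenToZModTwo (x : Bool) : Multiplicative (ZMod 2) :=
  if x then Multiplicative.ofAdd 1 else 1

theorem lift_kleinBottleGenToZModTwo_eq_one :
    ∀ r ∈ kleinBottleRels, FreeGroup.lift kleinBottleGenToZModTwo r = 1 := by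
  rintro r rfl
  simp only [map_mul, map_inv, map_pow, FreeGroup.lift_apply_of, kleinBottleGenToZModTwo]
  decide

def kleinBottleToZModTwo : PresentedGroup kleinBottleRels →* Multiplicative (ZMod 2) :=
  PresentedGroup.toGroup lift_kleinBottleGenToZModTwo_eq_one

theorem kleinBottle_of_true_ne_of_false :
    PresentedGroup.of (rels := kleinBottleRels) true ≠
      PresentedGroup.of (rels := kleinBottleRels) false := by
  intro h
  have h' := congrArg kleinBottleToZModTwo h
  simp only [kleinBottleToZModTwo, PresentedGroup.toGroup.of, kleinBottleGenToZModTwo] at h'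
  exact absurd h' (by decide)

/-- In the group `G = ⟨a, b ∣ a² = b²⟩`, the images of the generators satisfy
`a² = b²` but `a ≠ b`; hence the Frobenius map `x ↦ x²` on `G` is not injective,
i.e. `G` is not Frobenius injective. -/
theorem kleinBottleGroup_not_frobenius_injective :
    (PresentedGroup.of (rels := kleinBottleRels) true) ^ 2 =
      (PresentedGroup.of (rels := kleinBottleRels) false) ^ 2 ∧
    PresentedGroup.of (rels := kleinBottleRels) true ≠
      PresentedGroup.of (rels := kleinBottleRels) false ∧
    ¬ Function.Injective (fun x : PresentedGroup kleinBottleRels => x ^ 2) :=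
  ⟨kleinBottle_of_true_sq_eq_of_false_sq, kleinBottle_of_true_ne_of_false,
    fun h => kleinBottle_of_true_ne_of_false (h kleinBottle_of_true_sq_eq_of_false_sq)⟩
end

section
/- Let G be a finite group with |G| = n + 1 acting freely by homeomorphisms on a metric space X, and let f : X → ℝ be a continuous function whose coincidence set is empty, i.e., f is non-constant on every orbit G·x. Then there exists a continuous map s : X → P(X) into the space of Borel probability measures on X with the topology of weak convergence such that for all x ∈ X and g ∈ G: s(g·x) = s(x), the measure s(x) assigns full mass 1 to the orbit G·x, and s(x) is supported on a subset of G·x of cardinality at most n. -/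
open MeasureTheory NNReal ENNReal

section AuxCoinc

variable {X : Type*} (G : Type*) [Group G] [Fintype G] [MetricSpace X]
  [MeasurableSpace X] [BorelSpace X] [MulAction G X]

/-- The maximum of `f` over the orbit of `x`. -/
noncomputable def coincMax (f : X → ℝ) (x : X) : ℝ :=
  Finset.univ.sup' (Finset.univ_nonempty_iff.mpr ⟨1⟩) (fun g : G => f (g • x))

/-- The weight attached to the group element `g` at the point `x`. -/
noncomputable def coincWt (f : X → ℝ) (g : G) (x : X) : ℝ :=
  coincMax G f x - f (g • x)

/-- The total weight at `x`. -/
noncomputable def coincW (f : X → ℝ) (x : X) : ℝ :=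
  ∑ g : G, coincWt G f g x

/-- The normalized weight (coefficient). -/
noncomputable def coincCoef (f : X → ℝ) (g : G) (x : X) : ℝ≥0 :=
  Real.toNNReal (coincWt G f g x / coincW G f x)

/-- The measure assigned to `x`: convex combination of Dirac masses on the orbit. -/
noncomputable def coincMeas (f : X → ℝ) (x : X) : Measure X :=
  ∑ g : G, ((coincCoef G f g x : ℝ≥0∞) • Measure.dirac (g • x))

variable {G}

lemma coincWt_nonneg (f : X → ℝ) (g : G) (x : X) : 0 ≤ coincWt G f g x := by
  have : f (g • x) ≤ coincMax G f x :=
    Finset.le_sup' (fun g : G => f (g • x)) (Finset.mem_univ g)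
  simpa [coincWt] using this

lemma coincW_pos (f : X → ℝ) (x : X) (hx : ∃ g : G, f (g • x) ≠ f x) :
    0 < coincW G f x := by
  rcases hx with ⟨g, hg⟩
  have hnn : (0:ℝ) ≤ coincW G f x := by
    unfold coincW
    exact Finset.sum_nonneg fun g _ => coincWt_nonneg f g x
  rcases hnn.lt_or_eq with h | h
  · exact h
  exfalso
  unfold coincW at h
  have hall : ∀ g : G, coincWt G f g x = 0 := by
    intro g
    exact (Finset.sum_eq_zero_iff_of_nonneg
      (fun g _ => coincWt_nonneg f g x)).mp h.symm g (Finset.mem_univ g)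
  have h1 : f (g • x) = coincMax G f x := by
    have := hall g; simp [coincWt] at this; linarith
  have h2 : f x = coincMax G f x := by
    have := hall (1 : G); simp [coincWt, one_smul] at this; linarith
  exact hg (h1.trans h2.symm)

lemma coincCoef_sum (f : X → ℝ) (x : X) (hx : ∃ g : G, f (g • x) ≠ f x) :
    ∑ g : G, coincCoef G f g x = 1 := by
  have hW := coincW_pos f x hx
  have : ∑ g : G, coincCoef G f g x
      = Real.toNNReal (∑ g : G, coincWt G f g x / coincW G f x) := by
    rw [Real.toNNReal_sum_of_nonneg]
    · rfl
    · intro g _; exact div_nonneg (coincWt_nonneg f g x) hW.le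
  rw [this, ← Finset.sum_div]
  have h2 : (∑ i : G, coincWt G f i x) = coincW G f x := rfl
  rw [h2, div_self hW.ne', Real.toNNReal_one]

lemma coincMax_smul (f : X → ℝ) (g : G) (x : X) :
    coincMax G f (g • x) = coincMax G f x := by
  apply le_antisymm
  · apply Finset.sup'_le
    intro h _
    rw [smul_smul]
    exact Finset.le_sup' (fun k : G => f (k • x)) (Finset.mem_univ (h * g))
  · apply Finset.sup'_le
    intro k _
    have : f (k • x) = f ((k * g⁻¹) • g • x) := by
      rw [smul_smul, inv_mul_cancel_right]
    rw [this]
    exact Finset.le_sup' (fun h : G => f (h • g • x)) (Finset.mem_univ (k * g⁻¹))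

lemma coincWt_smul (f : X → ℝ) (h g : G) (x : X) :
    coincWt G f h (g • x) = coincWt G f (h * g) x := by
  simp [coincWt, coincMax_smul, mul_smul]

lemma coincW_smul (f : X → ℝ) (g : G) (x : X) :
    coincW G f (g • x) = coincW G f x := by
  unfold coincW
  simp_rw [coincWt_smul]
  exact Fintype.sum_bijective (· * g) (Group.mulRight_bijective g) _ _ (fun h => rfl)

lemma coincCoef_smul (f : X → ℝ) (h g : G) (x : X) :
    coincCoef G f h (g • x) = coincCoef G f (h * g) x := by
  simp [coincCoef, coincWt_smul, coincW_smul]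

lemma coincMeas_smul (f : X → ℝ) (g : G) (x : X) :
    coincMeas G f (g • x) = coincMeas G f x := by
  unfold coincMeas
  refine Fintype.sum_bijective (· * g) (Group.mulRight_bijective g)
    _ _ (fun h => ?_)
  rw [coincCoef_smul, smul_smul]

lemma coincMeas_apply (f : X → ℝ) (x : X) (A : Set X) :
    coincMeas G f x A
      = ∑ g : G, (coincCoef G f g x : ℝ≥0∞) * A.indicator 1 (g • x) := by
  rw [coincMeas, Measure.finset_sum_apply]
  refine Finset.sum_congr rfl fun g _ => ?_
  rw [Measure.smul_apply, Measure.dirac_apply, smul_eq_mul]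

lemma coincMeas_isProbability (f : X → ℝ) (x : X)
    (hx : ∃ g : G, f (g • x) ≠ f x) :
    IsProbabilityMeasure (coincMeas G f x) := by
  constructor
  rw [coincMeas_apply]
  simp only [Set.indicator_univ, Pi.one_apply, mul_one]
  rw [← ENNReal.coe_finset_sum, coincCoef_sum f x hx]
  rfl

lemma coincMeas_lintegral (f : X → ℝ) (x : X) (h : X → ℝ≥0∞) :
    ∫⁻ a, h a ∂(coincMeas G f x) = ∑ g : G, (coincCoef G f g x : ℝ≥0∞) * h (g • x) := by
  rw [coincMeas, lintegral_finset_sum_measure]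
  refine Finset.sum_congr rfl fun g _ => ?_
  rw [lintegral_smul_measure, lintegral_dirac, smul_eq_mul]

end AuxCoinc

/-- If a finite group `G` of order `n + 1` acting freely by homeomorphisms on a metric
space `X` and `f : X → ℝ` is a continuous function which is non-constant on every
orbit (empty coincidence set), then there is a continuous, `G`-invariant assignment
`s` of probability measures such that `s x` gives full mass to the orbit of `x` and
is supported on at most `n` of its points. -/
theorem exists_distributional_section_of_coincidence_free
    {G X : Type*} [Group G] [Fintype G] [MetricSpace X]
    [MeasurableSpace X] [BorelSpace X] [MulAction G X]
    (n : ℕ) (hcard : Fintype.card G = n + 1)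
    (hcont : ∀ g : G, Continuous (fun x : X => g • x))
    (hfree : ∀ (g : G) (x : X), g • x = x → g = 1)
    (f : X → ℝ) (hf : Continuous f)
    (hA : ∀ x : X, ∃ g : G, f (g • x) ≠ f x) :
    ∃ s : X → ProbabilityMeasure X, Continuous s ∧
      (∀ (g : G) (x : X), s (g • x) = s x) ∧
      (∀ x : X, (s x : Measure X) (MulAction.orbit G x) = 1) ∧
      (∀ x : X, ∃ F : Finset X, (F : Set X) ⊆ MulAction.orbit G x ∧ F.card ≤ n ∧
        (s x : Measure X) (F : Set X) = 1) := by
  classical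
  -- continuity facts about the coefficients
  have hMax : Continuous (coincMax G f) := by
    apply Continuous.finset_sup'_apply
    intro g _
    exact hf.comp (hcont g)
  have hWt : ∀ g : G, Continuous (coincWt G f g) := fun g =>
    hMax.sub (hf.comp (hcont g))
  have hW : Continuous (coincW G f) := continuous_finset_sum _ fun g _ => hWt g
  have hCoef : ∀ g : G, Continuous (coincCoef G f g) := fun g =>
    continuous_real_toNNReal.comp
      ((hWt g).div hW (fun x => (coincW_pos f x (hA x)).ne'))
  refine ⟨fun x => (⟨coincMeas G f x, coincMeas_isProbability f x (hA x)⟩ : ProbabilityMeasure X), ?_, ?_, ?_, ?_⟩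
  · -- continuity
    refine continuous_iff_continuousAt.mpr ?_
    intro x₀
    refine ProbabilityMeasure.tendsto_iff_forall_lintegral_tendsto.mpr ?_
    intro h
    have hrw : ∀ x : X,
        ∫⁻ a, h a ∂(ProbabilityMeasure.toMeasure
            ⟨coincMeas G f x, coincMeas_isProbability f x (hA x)⟩)
          = ((∑ g : G, coincCoef G f g x * h (g • x) : ℝ≥0) : ℝ≥0∞) := by
      intro x
      rw [show (ProbabilityMeasure.toMeasure
          ⟨coincMeas G f x, coincMeas_isProbability f x (hA x)⟩) = coincMeas G f x from rfl,
        coincMeas_lintegral]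
      push_cast
      rfl
    beta_reduce
    simp only [hrw]
    apply Continuous.tendsto
    apply ENNReal.continuous_coe.comp
    apply continuous_finset_sum
    intro g _
    exact (hCoef g).mul (h.continuous.comp (hcont g))
  · -- G-invariance
    intro g x
    apply Subtype.ext
    exact coincMeas_smul f g x
  · -- full mass on the orbit
    intro x
    show coincMeas G f x (MulAction.orbit G x) = 1
    rw [coincMeas_apply]
    have : ∀ g : G, (MulAction.orbit G x).indicator (1 : X → ℝ≥0∞) (g • x) = 1 := by
      intro g
      rw [Set.indicator_of_mem (MulAction.mem_orbit x g)]
      rfl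
    simp only [this, mul_one]
    rw [← ENNReal.coe_finset_sum, coincCoef_sum f x (hA x)]
    rfl
  · -- support on at most n points
    intro x
    obtain ⟨g₀, -, hg₀⟩ := Finset.exists_mem_eq_sup'
      (Finset.univ_nonempty_iff.mpr ⟨(1 : G)⟩) (fun g : G => f (g • x))
    have hcoef₀ : coincCoef G f g₀ x = 0 := by
      have : coincWt G f g₀ x = 0 := by
        simp [coincWt, coincMax, ← hg₀]
      simp [coincCoef, this]
    refine ⟨(Finset.univ.erase g₀).image (fun g : G => g • x), ?_, ?_, ?_⟩
    · intro y hy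
      simp only [Finset.coe_image, Set.mem_image, Finset.mem_coe] at hy
      rcases hy with ⟨g, -, rfl⟩
      exact MulAction.mem_orbit x g
    · calc ((Finset.univ.erase g₀).image (fun g : G => g • x)).card
          ≤ (Finset.univ.erase g₀).card := Finset.card_image_le
        _ = Fintype.card G - 1 := by
            rw [Finset.card_erase_of_mem (Finset.mem_univ g₀), Finset.card_univ]
        _ = n := by rw [hcard]; rfl
    · show coincMeas G f x (((Finset.univ.erase g₀).image (fun g : G => g • x) : Finset X) : Set X) = 1
      rw [coincMeas_apply]
      have hterm : ∀ g : G,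
          (coincCoef G f g x : ℝ≥0∞) *
            ((((Finset.univ.erase g₀).image (fun g : G => g • x)) : Set X)).indicator
              1 (g • x) = (coincCoef G f g x : ℝ≥0∞) := by
        intro g
        by_cases hg : g = g₀
        · subst hg; rw [hcoef₀]; simp
        · rw [Set.indicator_of_mem, Pi.one_apply, mul_one]
          simp only [Finset.coe_image, Set.mem_image, Finset.mem_coe]
          exact ⟨g, Finset.mem_erase.mpr ⟨hg, Finset.mem_univ g⟩, rfl⟩
      simp only [hterm]
      rw [← ENNReal.coe_finset_sum, coincCoef_sum f x (hA x)]
      rfl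
end

section
/- Let G be a finite group with |G| = n + 1 acting freely by homeomorphisms on a metric space X. Suppose there exists a continuous map s : X → P(X) into the space of Borel probability measures on X with the topology of weak convergence such that for all x ∈ X and g ∈ G: s(g·x) = s(x), the measure s(x) assigns full mass 1 to the orbit G·x, and at least one point of G·x has s(x)-measure zero (i.e., s(x) is supported on at most n of the n + 1 orbit points). Then there exists a continuous function f : X → ℝ that is non-constant on every orbit, i.e., with empty coincidence set A_f. -/
open MeasureTheory BoundedContinuousFunction

/-- A triangular bump of height `max 0 c` centred at `p`, as a bounded continuous function. -/
noncomputable def coincBump {X : Type*} [MetricSpace X] (c : ℝ) (p : X) : X →ᵇ ℝ :=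
  BoundedContinuousFunction.mkOfBound
    ⟨fun y => max 0 (c - dist p y), by
      exact continuous_const.max (continuous_const.sub (continuous_const.dist continuous_id))⟩
    |c|
    (by
      intro a b
      have key : ∀ y : X, 0 ≤ max 0 (c - dist p y) ∧ max 0 (c - dist p y) ≤ |c| := by
        intro y
        refine ⟨le_max_left _ _, ?_⟩
        have : c - dist p y ≤ |c| := by
          have := dist_nonneg (x := p) (y := y)
          have := le_abs_self c
          linarith
        exact max_le (abs_nonneg c) this
      obtain ⟨ha0, haC⟩ := key a
      obtain ⟨hb0, hbC⟩ := key b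
      rw [Real.dist_eq, abs_sub_le_iff]
      constructor <;> simp only [ContinuousMap.coe_mk] <;> linarith)

lemma coincBump_apply {X : Type*} [MetricSpace X] (c : ℝ) (p y : X) :
    coincBump c p y = max 0 (c - dist p y) := rfl

lemma coincBump_dist_le {X : Type*} [MetricSpace X] (c c' : ℝ) (p p' : X) :
    dist (coincBump c p) (coincBump c' p') ≤ |c - c'| + dist p p' := by
  have h0 : (0 : ℝ) ≤ |c - c'| + dist p p' := add_nonneg (abs_nonneg _) dist_nonneg
  rw [BoundedContinuousFunction.dist_le h0]
  intro y
  rw [coincBump_apply, coincBump_apply, Real.dist_eq]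
  calc |max 0 (c - dist p y) - max 0 (c' - dist p' y)|
      ≤ |(c - dist p y) - (c' - dist p' y)| := by
        simpa [max_comm] using
          abs_max_sub_max_le_abs (c - dist p y) (c' - dist p' y) 0
    _ = |(c - c') + (dist p' y - dist p y)| := by ring_nf
    _ ≤ |c - c'| + |dist p' y - dist p y| := abs_add_le _ _
    _ ≤ |c - c'| + dist p p' := by
        have := abs_dist_sub_le p' p y
        rw [dist_comm p p']
        linarith

/-- Integral of a bump against a probability measure supported on a finite set whose
points other than `p` are at distance at least `c` from `p`. -/
lemma integral_coincBump {X : Type*} [MetricSpace X] [MeasurableSpace X] [BorelSpace X]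
    (μ : Measure X) [IsProbabilityMeasure μ] (O : Finset X) (hO : μ (O : Set X) = 1)
    (p : X) (hp : p ∈ O) (c : ℝ) (hc : 0 ≤ c)
    (hsep : ∀ q ∈ O, q ≠ p → c ≤ dist p q) :
    ∫ y, coincBump c p y ∂μ = (μ {p}).toReal * c := by
  have hOm : MeasurableSet (O : Set X) := O.measurableSet
  have hcompl : ∀ᵐ y ∂μ, y ∈ (O : Set X) := by
    rw [MeasureTheory.ae_iff]
    have : μ ((O : Set X)ᶜ) = 0 := by
      rw [measure_compl hOm (measure_ne_top _ _), hO, measure_univ, tsub_self]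
    exact this
  have h1 : ∫ y, coincBump c p y ∂μ = ∫ y in (O : Set X), coincBump c p y ∂μ := by
    rw [← integral_indicator hOm]
    refine integral_congr_ae ?_
    filter_upwards [hcompl] with y hy
    simp [Set.indicator_of_mem hy]
  rw [h1, integral_finset O ((coincBump c p).integrable μ).integrableOn]
  rw [Finset.sum_eq_single p]
  · rw [coincBump_apply, dist_self, sub_zero, max_eq_right hc, smul_eq_mul, measureReal_def]
  · intro q hq hqp
    rw [coincBump_apply, max_eq_left, smul_zero]
    have := hsep q hq hqp
    linarith
  · intro h; exact absurd hp h

/-- If a finite group `G` of order `n + 1` acts freely by homeomorphisms on a metric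
space `X` and there is a continuous, `G`-invariant assignment `s` of probability
measures such that `s x` gives full mass to the orbit of `x` while at least one point
of the orbit has `s x`-measure zero, then there is a continuous function `f : X → ℝ`
which is non-constant on every orbit (empty coincidence set). -/
theorem exists_coincidence_free_of_distributional_section
    {G X : Type*} [Group G] [Fintype G] [MetricSpace X]
    [MeasurableSpace X] [BorelSpace X] [MulAction G X]
    (n : ℕ) (hcard : Fintype.card G = n + 1)
    (hcont : ∀ g : G, Continuous (fun x : X => g • x))
    (hfree : ∀ (g : G) (x : X), g • x = x → g = 1)
    (s : X → ProbabilityMeasure X) (hs : Continuous s)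
    (hinv : ∀ (g : G) (x : X), s (g • x) = s x)
    (horb : ∀ x : X, (s x : Measure X) (MulAction.orbit G x) = 1)
    (hzero : ∀ x : X, ∃ g : G, (s x : Measure X) {g • x} = 0) :
    ∃ f : X → ℝ, Continuous f ∧ ∀ x : X, ∃ g : G, f (g • x) ≠ f x := by
  classical
  have horbit_eq : ∀ x : X, MulAction.orbit G x = ⋃ g : G, {g • x} := by
    intro x
    rw [← Set.range_eq_iUnion]
    rfl
  by_cases hG : ∃ g : G, g ≠ 1
  swap
  · -- trivial group case: hypotheses are contradictory at each point
    push_neg at hG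
    refine ⟨0, continuous_const, fun x => ?_⟩
    exfalso
    obtain ⟨g, hg⟩ := hzero x
    have h1 : (s x : Measure X) (MulAction.orbit G x) = 0 := by
      rw [horbit_eq x]
      refine measure_iUnion_null fun g' => ?_
      rw [hG g', ← hG g]
      exact hg
    rw [horb x] at h1
    exact one_ne_zero h1
  obtain ⟨g₀, hg₀⟩ := hG
  set T : Finset G := Finset.univ.erase 1 with hT
  have hTne : T.Nonempty := ⟨g₀, Finset.mem_erase.2 ⟨hg₀, Finset.mem_univ _⟩⟩
  set r : X → ℝ := fun x => T.inf' hTne (fun g => dist x (g • x)) with hrdef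
  have hrcont : Continuous r :=
    Continuous.finset_inf'_apply hTne fun g _ => continuous_id.dist (hcont g)
  have hrpos : ∀ x, 0 < r x := by
    intro x
    rw [hrdef]
    simp only [Finset.lt_inf'_iff]
    intro g hg
    rw [dist_pos]
    intro hcontr
    exact (Finset.mem_erase.1 hg).1 (hfree g x hcontr.symm)
  have hrle : ∀ (x : X) (g : G), g ≠ 1 → r x ≤ dist x (g • x) := by
    intro x g hg
    exact Finset.inf'_le _ (Finset.mem_erase.2 ⟨hg, Finset.mem_univ _⟩)
  set Φ : X → (X →ᵇ ℝ) := fun x => coincBump (r x) x with hΦdef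
  have hΦcont : Continuous Φ := by
    rw [Metric.continuous_iff']
    intro x ε hε
    have hcont' : ContinuousAt (fun x' => |r x' - r x| + dist x' x) x :=
      (((hrcont.continuousAt).sub continuousAt_const).abs).add
        ((continuous_id.dist continuous_const).continuousAt)
    have hval : |r x - r x| + dist x x = 0 := by simp
    have := hcont'.eventually_lt continuousAt_const (by rw [hval]; exact hε)
    filter_upwards [this] with x' hx'
    calc dist (Φ x') (Φ x) ≤ |r x' - r x| + dist x' x := coincBump_dist_le _ _ _ _
      _ < ε := hx'
  set f : X → ℝ := fun x => ∫ y, Φ x y ∂(s x : Measure X) with hfdef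
  -- value of f at orbit points
  have horbO : ∀ x : X, MulAction.orbit G x = ((Finset.univ.image (fun g : G => g • x)) : Set X) := by
    intro x
    ext y
    simp [MulAction.orbit, Set.mem_range, eq_comm]
  have hval : ∀ (x : X) (g : G),
      f (g • x) = ((s x : Measure X) {g • x}).toReal * r (g • x) := by
    intro x g
    have hsg : s (g • x) = s x := hinv g x
    have hf : f (g • x) = ∫ y, coincBump (r (g • x)) (g • x) y ∂(s x : Measure X) := by
      rw [hfdef]
      simp only [hΦdef]
      rw [hsg]
    rw [hf]
    set O : Finset X := Finset.univ.image (fun h : G => h • x) with hO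
    have hOmass : (s x : Measure X) (O : Set X) = 1 := by
      rw [← horbO x]; exact horb x
    have hpmem : g • x ∈ O := Finset.mem_image.2 ⟨g, Finset.mem_univ _, rfl⟩
    refine integral_coincBump _ O hOmass _ hpmem _ (le_of_lt (hrpos _)) ?_
    intro q hq hqp
    obtain ⟨h, _, rfl⟩ := Finset.mem_image.1 hq
    have hhg : h * g⁻¹ ≠ 1 := by
      intro hcontr
      apply hqp
      have : h = g := by
        have := mul_eq_one_iff_eq_inv.1 hcontr
        simpa using this
      rw [this]
    have key : (h * g⁻¹) • (g • x) = h • x := by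
      rw [smul_smul, inv_mul_cancel_right]
    have := hrle (g • x) (h * g⁻¹) hhg
    rw [key] at this
    exact this
  -- continuity of f
  have hfcont : Continuous f := by
    rw [continuous_iff_continuousAt]
    intro x₀
    have h1 : Filter.Tendsto (fun x => ∫ y, Φ x₀ y ∂(s x : Measure X)) (nhds x₀)
        (nhds (∫ y, Φ x₀ y ∂(s x₀ : Measure X))) :=
      (ProbabilityMeasure.tendsto_iff_forall_integral_tendsto.mp (hs.tendsto x₀)) (Φ x₀)
    have h2 : Filter.Tendsto
        (fun x => (∫ y, Φ x y ∂(s x : Measure X)) - ∫ y, Φ x₀ y ∂(s x : Measure X))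
        (nhds x₀) (nhds 0) := by
      have hb : ∀ x : X,
          ‖(∫ y, Φ x y ∂(s x : Measure X)) - ∫ y, Φ x₀ y ∂(s x : Measure X)‖
            ≤ dist (Φ x) (Φ x₀) := by
        intro x
        have hsub : (∫ y, Φ x y ∂(s x : Measure X)) - (∫ y, Φ x₀ y ∂(s x : Measure X))
            = ∫ y, (Φ x - Φ x₀) y ∂(s x : Measure X) := by
          rw [← integral_sub ((Φ x).integrable _) ((Φ x₀).integrable _)]
          simp
        rw [hsub]
        calc ‖∫ y, (Φ x - Φ x₀) y ∂(s x : Measure X)‖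
            ≤ ‖Φ x - Φ x₀‖ := (Φ x - Φ x₀).norm_integral_le_norm _
          _ = dist (Φ x) (Φ x₀) := by rw [dist_eq_norm]
      have hdist0 : Filter.Tendsto (fun x => dist (Φ x) (Φ x₀)) (nhds x₀) (nhds 0) := by
        have := (hΦcont.tendsto x₀).dist (tendsto_const_nhds (x := Φ x₀))
        simpa using this
      exact squeeze_zero_norm hb hdist0
    have := h2.add h1
    rw [zero_add] at this
    have heq : (fun x => ((∫ y, Φ x y ∂(s x : Measure X))
        - ∫ y, Φ x₀ y ∂(s x : Measure X)) + ∫ y, Φ x₀ y ∂(s x : Measure X)) = f := by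
      funext x; rw [hfdef]; ring
    rw [heq] at this
    exact this
  refine ⟨f, hfcont, fun x => ?_⟩
  by_contra hcon
  push_neg at hcon
  obtain ⟨g₁, hg₁⟩ := hzero x
  have hfx0 : f x = 0 := by
    rw [← hcon g₁, hval x g₁, hg₁]
    simp
  have hall : ∀ g : G, (s x : Measure X) {g • x} = 0 := by
    intro g
    have := hcon g
    rw [hval x g, hfx0] at this
    have htR : ((s x : Measure X) {g • x}).toReal = 0 := by
      rcases mul_eq_zero.1 this with h | h
      · exact h
      · exact absurd h (ne_of_gt (hrpos _))
    have hne : (s x : Measure X) {g • x} ≠ ⊤ := measure_ne_top _ _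
    exact (ENNReal.toReal_eq_zero_iff _).1 htR |>.resolve_right hne
  have h0 : (s x : Measure X) (MulAction.orbit G x) = 0 := by
    rw [horbit_eq x]
    exact measure_iUnion_null hall
  rw [horb x] at h0
  exact one_ne_zero h0
end

section
/- Let p : E → B be a covering map with E path-connected and simply connected, let e₀ ∈ E and x₀ = p(e₀). For each e ∈ p⁻¹(x₀), let X_e be the set of loops γ at x₀ in B whose unique lift starting at e₀ ends at e. Then the sets X_e, for e ∈ p⁻¹(x₀), are nonempty, pairwise disjoint, and are exactly the path components of the loop space Ω(B, x₀) (the space of paths from x₀ to x₀ with the compact-open topology); moreover, each X_e is homotopy equivalent to the loop space Ω(E, e₀). In particular, the path components of Ω(B, x₀) are in bijection with the fiber p⁻¹(x₀). -/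
open Set unitInterval Filter Topology

namespace LoopCoverAux

theorem continuousOn_union_aux {X Z : Type*} [TopologicalSpace X] [TopologicalSpace Z]
    {f : X → Z} {s t : Set X} (hs : ContinuousOn f s) (ht : ContinuousOn f t)
    (h1 : ∀ x ∈ s, x ∉ t → x ∉ closure t) (h2 : ∀ x ∈ t, x ∉ s → x ∉ closure s) :
    ContinuousOn f (s ∪ t) := by
  intro x hx
  by_cases hxs : x ∈ s <;> by_cases hxt : x ∈ t
  · exact (hs x hxs).union (ht x hxt)
  · exact (hs x hxs).union (continuousWithinAt_of_notMem_closure (h1 x hxs hxt))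
  · exact (continuousWithinAt_of_notMem_closure (h2 x hxt hxs)).union (ht x hxt)
  · rcases hx with h | h <;> contradiction

theorem isClosed_Icc_I {a b : I} : IsClosed (Icc a b) := by
  have h : Icc a b = (Subtype.val : I → ℝ) ⁻¹' (Icc (a : ℝ) (b : ℝ)) := by
    ext u
    simp only [mem_Icc, mem_preimage, ← Subtype.coe_le_coe]
  rw [h]
  exact isClosed_Icc.preimage continuous_subtype_val

theorem Icc_zero_one : Icc (0 : I) 1 = univ :=
  eq_univ_of_forall fun t => ⟨nonneg', le_one'⟩

variable {Y : Type*} [TopologicalSpace Y] {a b : Y}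

/-- The underlying function of the homotopy showing `(δ ⬝ α) ⬝ α.symm ≃ δ`. -/
noncomputable def kFun (α : Path a b) (c : Y) : (I × Path c a) × I → Y := fun q =>
  if (q.2 : ℝ) ≤ (1 + 3 * (q.1.1 : ℝ)) / 4 then
    (q.1.2).extend (4 * (q.2 : ℝ) / (1 + 3 * (q.1.1 : ℝ)))
  else α.extend (min (4 * (q.2 : ℝ) - (1 + 3 * (q.1.1 : ℝ))) (2 * (1 - (q.2 : ℝ))))

theorem kFun_continuous (α : Path a b) (c : Y) : Continuous (kFun α c) := by
  have hden : ∀ q : (I × Path c a) × I, (1 + 3 * (q.1.1 : ℝ)) ≠ 0 := by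
    intro q
    have := q.1.1.2.1
    positivity
  apply Continuous.if_le
  · apply Continuous.pathExtend
    · exact (continuous_snd.comp (continuous_fst.comp continuous_fst)).eval continuous_snd
    · exact (continuous_const.mul (continuous_subtype_val.comp continuous_snd)).div
        (continuous_const.add (continuous_const.mul
          (continuous_subtype_val.comp (continuous_fst.comp continuous_fst)))) hden
  · exact α.continuous_extend.comp
      (((continuous_const.mul (continuous_subtype_val.comp continuous_snd)).sub
        (continuous_const.add (continuous_const.mul
          (continuous_subtype_val.comp (continuous_fst.comp continuous_fst))))).min
        ((continuous_const.mul (continuous_const.sub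
          (continuous_subtype_val.comp continuous_snd)))))
  · exact continuous_subtype_val.comp continuous_snd
  · exact (continuous_const.add (continuous_const.mul
      (continuous_subtype_val.comp (continuous_fst.comp continuous_fst)))).div_const 4
  · intro q hq
    have h1 : 4 * (q.2 : ℝ) / (1 + 3 * (q.1.1 : ℝ)) = 1 := by
      rw [hq]; field_simp; exact div_self (hden q)
    have h2 : 4 * (q.2 : ℝ) - (1 + 3 * (q.1.1 : ℝ)) = 0 := by rw [hq]; ring
    have h3 : (0 : ℝ) ≤ 2 * (1 - (q.2 : ℝ)) := by
      have := q.2.2.2; linarith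
    rw [h1, h2, min_eq_left h3, Path.extend_one, Path.extend_zero]

theorem kFun_source (α : Path a b) (c : Y) (q : I × Path c a) : kFun α c (q, 0) = c := by
  have h : ((0 : I) : ℝ) ≤ (1 + 3 * (q.1 : ℝ)) / 4 := by
    have := q.1.2.1
    simp only [Icc.coe_zero]
    linarith
  simp only [kFun]
  rw [if_pos h]
  simp

theorem kFun_target (α : Path a b) (c : Y) (q : I × Path c a) : kFun α c (q, 1) = a := by
  by_cases h : ((1 : I) : ℝ) ≤ (1 + 3 * (q.1 : ℝ)) / 4
  · have hs1 : (q.1 : ℝ) = 1 := by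
      have h1 := q.1.2.2
      simp only [Icc.coe_one] at h
      linarith
    have : 4 * ((1 : I) : ℝ) / (1 + 3 * (q.1 : ℝ)) = 1 := by
      rw [hs1]; norm_num
    simp only [kFun, if_pos h, this, Path.extend_one]
  · have hs : (0 : ℝ) ≤ 3 - 3 * (q.1 : ℝ) := by
      have := q.1.2.2; linarith
    have hmin : min (4 * ((1 : I) : ℝ) - (1 + 3 * (q.1 : ℝ))) (2 * (1 - ((1 : I) : ℝ))) = 0 := by
      simp only [Icc.coe_one]
      rw [min_eq_right]
      · ring
      · linarith
    simp only [kFun, if_neg h, hmin, Path.extend_zero]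

/-- The homotopy from `fun δ => (δ.trans α).trans α.symm` to the identity. -/
noncomputable def transHomotopy (α : Path a b) (c : Y) :
    ContinuousMap.Homotopy
      (ContinuousMap.mk (fun δ : Path c a => (δ.trans α).trans α.symm)
        ((continuous_id.path_trans continuous_const).path_trans continuous_const))
      (ContinuousMap.id (Path c a)) where
  toFun := fun q => Path.mk ⟨fun t => kFun α c (q, t),
      (kFun_continuous α c).comp (Continuous.prodMk_right q)⟩
    (kFun_source α c q) (kFun_target α c q)
  continuous_toFun := Path.continuous_uncurry_iff.mp (kFun_continuous α c)
  map_zero_left := by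
    intro δ
    ext t
    show kFun α c ((0, δ), t) = ((δ.trans α).trans α.symm) t
    have ht0 := t.2.1
    have ht1 := t.2.2
    simp only [kFun, Icc.coe_zero, mul_zero, add_zero, Path.trans_apply, Path.symm_apply]
    split_ifs with h1 h2 h3 <;>
      [skip; (exfalso; linarith); (exfalso; linarith);
       (exfalso; linarith); skip; skip]
    · rw [← Path.extend_apply]
      congr 1
      push_cast
      ring_nf
    · rw [← Path.extend_apply]
      congr 1
      push_cast
      rw [min_eq_left (by linarith)]
      ring
    · simp only [Function.comp_apply]
      rw [← Path.extend_extends']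
      congr 1
      rw [coe_symm_eq]
      push_cast
      rw [min_eq_right (by linarith)]
      ring
  map_one_left := by
    intro δ
    ext t
    show kFun α c ((1, δ), t) = δ t
    have h : (t : ℝ) ≤ (1 + 3 * ((1 : I) : ℝ)) / 4 := by
      have := t.2.2
      simp only [Icc.coe_one]
      linarith
    have h4 : 4 * (t : ℝ) / (1 + 3 * ((1 : I) : ℝ)) = (t : ℝ) := by
      simp only [Icc.coe_one]
      ring
    simp only [kFun, if_pos h, h4]
    exact δ.extend_extends' t

/-- Concatenation with a fixed path is a homotopy equivalence of path spaces. -/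
noncomputable def pathTransEquiv (α : Path a b) (c : Y) :
    ContinuousMap.HomotopyEquiv (Path c a) (Path c b) where
  toFun := ContinuousMap.mk (fun δ => δ.trans α) (continuous_id.path_trans continuous_const)
  invFun := ContinuousMap.mk (fun ζ => ζ.trans α.symm) (continuous_id.path_trans continuous_const)
  left_inv := ⟨(transHomotopy α c).cast (ContinuousMap.ext fun δ => rfl) rfl⟩
  right_inv := ⟨(transHomotopy α.symm c).cast
    (ContinuousMap.ext fun ζ => by simp [Path.symm_symm]) rfl⟩


variable {E B : Type*} [TopologicalSpace E] [TopologicalSpace B] {p : E → B}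

theorem key (hp : IsCoveringMap p) {x₀ : B} {e₀ : E} (hx₀ : p e₀ = x₀) (γ₀ : Path x₀ x₀) :
    ∃ N : Set (Path x₀ x₀), IsOpen N ∧ γ₀ ∈ N ∧ ∃ Λ : Path x₀ x₀ × I → E,
      ContinuousOn Λ (N ×ˢ (univ : Set I)) ∧
      ∀ γ ∈ N, Λ (γ, 0) = e₀ ∧ ∀ u : I, p (Λ (γ, u)) = γ u := by
  classical
  haveI hne : ∀ s : I, Nonempty (p ⁻¹' {γ₀ s}) := by
    obtain ⟨Γ, hΓ, -⟩ := hp.exists_path_lifts (γ₀ : C(I, B)) e₀ (γ₀.source.trans hx₀.symm)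
    exact fun s => ⟨⟨Γ s, congrFun hΓ s⟩⟩
  obtain ⟨δ, δpos, hδ⟩ := lebesgue_number_lemma_of_metric (isCompact_univ (X := I))
    (c := fun s : I => γ₀ ⁻¹' ((hp (γ₀ s)).toTrivialization.baseSet))
    (fun s => (hp (γ₀ s)).toTrivialization.open_baseSet.preimage γ₀.continuous)
    (fun t _ => mem_iUnion.mpr ⟨t, (hp (γ₀ t)).mem_toTrivialization_baseSet⟩)
  choose bf hbf using fun t : I => hδ t trivial
  obtain ⟨n, hn⟩ := exists_nat_one_div_lt δpos
  set Nn : ℕ := n + 1 with hNndef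
  have hNn : (0 : ℝ) < (Nn : ℝ) := by positivity
  set τ : ℕ → I := fun k => ⟨min ((k : ℝ) / (Nn : ℝ)) 1,
    ⟨le_min (by positivity) zero_le_one, min_le_right _ _⟩⟩ with hτ
  have τmono : ∀ k, τ k ≤ τ (k + 1) := by
    intro k
    apply Subtype.mk_le_mk.mpr
    apply min_le_min _ le_rfl
    gcongr
    push_cast
    linarith
  have τ0 : τ 0 = 0 := Subtype.ext (by simp [hτ])
  have τlast : τ Nn = 1 := Subtype.ext (by simp [hτ, div_self (ne_of_gt hNn)])
  have τ0le : ∀ k, (0 : I) ≤ τ k := fun _ => nonneg'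
  have hsub : ∀ k, ∀ u ∈ Icc (τ k) (τ (k + 1)),
      γ₀ u ∈ (hp (γ₀ (bf (τ k)))).toTrivialization.baseSet := by
    intro k u hu
    apply hbf (τ k)
    rw [Metric.mem_ball, Subtype.dist_eq, Real.dist_eq,
      abs_of_nonneg (sub_nonneg.mpr (Subtype.coe_le_coe.mpr hu.1))]
    have hτd : ((τ (k + 1) : I) : ℝ) ≤ ((τ k : I) : ℝ) + 1 / (Nn : ℝ) := by
      show min (((k + 1 : ℕ) : ℝ) / (Nn : ℝ)) 1 ≤ min ((k : ℝ) / (Nn : ℝ)) 1 + 1 / (Nn : ℝ)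
      have heq : ((k + 1 : ℕ) : ℝ) / (Nn : ℝ) = (k : ℝ) / (Nn : ℝ) + 1 / (Nn : ℝ) := by
        push_cast; ring
      rw [heq]
      rcases le_total ((k : ℝ) / (Nn : ℝ)) 1 with h | h
      · rw [min_eq_left h]
        exact min_le_left _ _
      · rw [min_eq_right h]
        exact le_trans (min_le_right _ _) (le_add_of_nonneg_right (by positivity))
    have hu2 : ((u : I) : ℝ) ≤ ((τ (k + 1) : I) : ℝ) := Subtype.coe_le_coe.mpr hu.2
    have hNn' : 1 / (Nn : ℝ) < δ := by
      have : (Nn : ℝ) = (n : ℝ) + 1 := by push_cast [hNndef]; ring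
      rw [this]
      exact hn
    linarith
  have main : ∀ k, k ≤ Nn → ∃ N : Set (Path x₀ x₀), IsOpen N ∧ γ₀ ∈ N ∧
      ∃ Λ : Path x₀ x₀ × I → E, ContinuousOn Λ (N ×ˢ Icc 0 (τ k)) ∧
        ∀ γ ∈ N, Λ (γ, 0) = e₀ ∧ ∀ u ∈ Icc (0 : I) (τ k), p (Λ (γ, u)) = γ u := by
    intro k
    induction k with
    | zero =>
      intro _
      refine ⟨univ, isOpen_univ, mem_univ _, fun _ => e₀, continuousOn_const, fun γ _ => ⟨rfl, ?_⟩⟩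
      intro u hu
      have hu0 : u = 0 := le_antisymm (τ0 ▸ hu.2) hu.1
      rw [hu0, hx₀]
      exact γ.source.symm
    | succ k ih =>
      intro hk1
      obtain ⟨N, hNo, hγ₀N, Λ, hΛc, hΛ⟩ := ih (Nat.le_of_succ_le hk1)
      haveI : DiscreteTopology ↥(p ⁻¹' {γ₀ (bf (τ k))}) := (hp (γ₀ (bf (τ k)))).1
      obtain ⟨T', hT'base⟩ : ∃ T' : Bundle.Trivialization (↥(p ⁻¹' {γ₀ (bf (τ k))})) p,
          ∀ u ∈ Icc (τ k) (τ (k + 1)), γ₀ u ∈ T'.baseSet :=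
        ⟨(hp (γ₀ (bf (τ k)))).toTrivialization, fun u hu => hsub k u hu⟩
      have he₁cont : ContinuousOn (fun γ : Path x₀ x₀ => Λ (γ, τ k)) N :=
        hΛc.comp ((continuous_id.prodMk continuous_const).continuousOn)
          (fun γ hγ => ⟨hγ, τ0le k, le_rfl⟩)
      have hpe₁ : ∀ γ ∈ N, p (Λ (γ, τ k)) = γ (τ k) :=
        fun γ hγ => (hΛ γ hγ).2 (τ k) ⟨τ0le k, le_rfl⟩
      have hsrc₀ : Λ (γ₀, τ k) ∈ T'.source := by
        rw [T'.mem_source, hpe₁ γ₀ hγ₀N]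
        exact hT'base (τ k) ⟨le_rfl, τmono k⟩
      obtain ⟨c, hceq⟩ : ∃ c, c = (T' (Λ (γ₀, τ k))).2 := ⟨_, rfl⟩
      have hVopen : IsOpen (T'.source ∩ (Prod.snd ∘ T') ⁻¹' {c}) :=
        T'.continuousOn_toFun.isOpen_inter_preimage T'.open_source
          (continuous_snd.isOpen_preimage _ (isOpen_discrete _))
      have hMopen : IsOpen {γ : Path x₀ x₀ | MapsTo γ (Icc (τ k) (τ (k + 1))) T'.baseSet} := by
        have h : {γ : Path x₀ x₀ | MapsTo γ (Icc (τ k) (τ (k + 1))) T'.baseSet} =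
            (fun γ : Path x₀ x₀ => (γ : C(I, B))) ⁻¹'
            {f : C(I, B) | MapsTo f (Icc (τ k) (τ (k + 1))) T'.baseSet} := rfl
        rw [h]
        exact (ContinuousMap.isOpen_setOf_mapsTo isClosed_Icc_I.isCompact
          T'.open_baseSet).preimage continuous_induced_dom
      obtain ⟨N', hN'def⟩ : ∃ S : Set (Path x₀ x₀),
          S = (N ∩ {γ : Path x₀ x₀ | MapsTo γ (Icc (τ k) (τ (k + 1))) T'.baseSet}) ∩
            (N ∩ (fun γ : Path x₀ x₀ => Λ (γ, τ k)) ⁻¹'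
              (T'.source ∩ (Prod.snd ∘ T') ⁻¹' {c})) := ⟨_, rfl⟩
      refine ⟨N', ?_, ?_,
        fun q => if q.2 ≤ τ k then Λ q else T'.toPartialHomeomorph.symm (q.1 q.2, c),
        ?_, ?_⟩
      · rw [hN'def]
        exact (hNo.inter hMopen).inter (he₁cont.isOpen_inter_preimage hNo hVopen)
      · rw [hN'def]
        exact ⟨⟨hγ₀N, fun u hu => hT'base u hu⟩, hγ₀N, hsrc₀, hceq.symm⟩
      · -- continuity
        have hdecomp : ∀ S : Set (Path x₀ x₀), S ×ˢ Icc (0 : I) (τ (k + 1)) =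
            (S ×ˢ Icc (0 : I) (τ k)) ∪ (S ×ˢ Icc (τ k) (τ (k + 1))) := by
          intro S
          ext q
          constructor
          · rintro ⟨hγ, h0, h1⟩
            rcases le_total q.2 (τ k) with h | h
            · exact Or.inl ⟨hγ, h0, h⟩
            · exact Or.inr ⟨hγ, h, h1⟩
          · rintro (⟨hγ, h0, h1⟩ | ⟨hγ, h0, h1⟩)
            · exact ⟨hγ, h0, le_trans h1 (τmono k)⟩
            · exact ⟨hγ, le_trans (τ0le k) h0, h1⟩
        rw [hdecomp]
        apply continuousOn_union_aux
        · -- piece 1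
          apply ContinuousOn.congr (hΛc.mono
            (prod_mono (fun γ h => by rw [hN'def] at h; exact h.1.1) Subset.rfl))
          rintro ⟨γ, u⟩ ⟨hγ, hu⟩
          show (if u ≤ τ k then Λ (γ, u) else _) = Λ (γ, u)
          rw [if_pos hu.2]
        · -- piece 2
          have hS : ContinuousOn (fun q : Path x₀ x₀ × I => T'.toPartialHomeomorph.symm
              (q.1 q.2, c)) (N' ×ˢ Icc (τ k) (τ (k + 1))) := by
            apply T'.toPartialHomeomorph.continuousOn_symm.comp
            · exact ((continuous_fst.eval continuous_snd).prodMk continuous_const).continuousOn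
            · rintro ⟨γ, u⟩ ⟨hγ, hu⟩
              rw [hN'def] at hγ
              rw [T'.mem_target]
              exact hγ.1.2 hu
          apply hS.congr
          rintro ⟨γ, u⟩ ⟨hγ, hu⟩
          rw [hN'def] at hγ
          by_cases h : u ≤ τ k
          · have hu' : u = τ k := le_antisymm h hu.1
            have hmem : Λ (γ, τ k) ∈ T'.source := hγ.2.2.1
            have hsnd : (T' (Λ (γ, τ k))).2 = c := hγ.2.2.2
            show (if u ≤ τ k then Λ (γ, u) else _) = _
            rw [if_pos h, hu']
            calc Λ (γ, τ k)
                = T'.toPartialHomeomorph.symm (p (Λ (γ, τ k)), (T' (Λ (γ, τ k))).2) :=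
                  (T'.symm_apply_mk_proj hmem).symm
              _ = T'.toPartialHomeomorph.symm (γ (τ k), c) := by rw [hpe₁ γ hγ.2.1, hsnd]
          · show (if u ≤ τ k then _ else _) = _
            rw [if_neg h]
        · rintro ⟨γ, u⟩ ⟨hγ, hu⟩ hnot hcl
          have hmem : (γ, u) ∈ (univ : Set (Path x₀ x₀)) ×ˢ Icc (τ k) (τ (k + 1)) :=
            closure_minimal (prod_mono (subset_univ _) Subset.rfl)
              (isClosed_univ.prod isClosed_Icc_I) hcl
          exact hnot ⟨hγ, hmem.2⟩
        · rintro ⟨γ, u⟩ ⟨hγ, hu⟩ hnot hcl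
          have hmem : (γ, u) ∈ (univ : Set (Path x₀ x₀)) ×ˢ Icc (0 : I) (τ k) :=
            closure_minimal (prod_mono (subset_univ _) Subset.rfl)
              (isClosed_univ.prod isClosed_Icc_I) hcl
          exact hnot ⟨hγ, hmem.2⟩
      · -- pointwise
        rintro γ hγmem
        rw [hN'def] at hγmem
        obtain ⟨⟨hγN, hγM⟩, -, hγsrc, hγsnd⟩ := hγmem
        constructor
        · show (if (0 : I) ≤ τ k then Λ (γ, 0) else _) = e₀
          rw [if_pos (τ0le k)]
          exact (hΛ γ hγN).1
        · intro u hu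
          by_cases h : u ≤ τ k
          · show p (if u ≤ τ k then Λ (γ, u) else _) = γ u
            rw [if_pos h]
            exact (hΛ γ hγN).2 u ⟨hu.1, h⟩
          · show p (if u ≤ τ k then _ else T'.toPartialHomeomorph.symm (γ u, c)) = γ u
            rw [if_neg h]
            exact T'.proj_symm_apply' (hγM ⟨le_of_not_ge h, hu.2⟩)
  obtain ⟨N, hNo, hγN, Λ, hΛc, hΛ⟩ := main Nn le_rfl
  rw [τlast, Icc_zero_one] at hΛc hΛ
  exact ⟨N, hNo, hγN, Λ, hΛc, fun γ hγ => ⟨(hΛ γ hγ).1, fun u => (hΛ γ hγ).2 u trivial⟩⟩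


end LoopCoverAux

open Set unitInterval in
/-- Let `p : E → B` be a covering map with `E` path-connected and simply connected,
`e₀ ∈ E`, `x₀ = p e₀`. For `e` in the fiber over `x₀`, let `X e` be the set of loops
at `x₀` whose (unique) lift starting at `e₀` ends at `e`. Then the sets `X e`,
`e ∈ p⁻¹(x₀)`, are nonempty, pairwise disjoint, and are exactly the path components
of the loop space `Ω(B, x₀)`; moreover each `X e` is homotopy equivalent to
`Ω(E, e₀)`. In particular the path components of `Ω(B, x₀)` are in bijection with
the fiber `p⁻¹(x₀)`. -/
theorem loopSpace_components_of_universal_cover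
    {E B : Type*} [TopologicalSpace E] [TopologicalSpace B]
    (p : E → B) (hp : IsCoveringMap p)
    [PathConnectedSpace E] [SimplyConnectedSpace E]
    (e₀ : E) (x₀ : B) (hx₀ : p e₀ = x₀)
    (X : E → Set (Path x₀ x₀))
    (hX : ∀ e : E, X e = {γ : Path x₀ x₀ | ∃ γt : Path e₀ e, ∀ t, p (γt t) = γ t}) :
    (∀ e ∈ p ⁻¹' {x₀}, (X e).Nonempty) ∧
    (∀ e ∈ p ⁻¹' {x₀}, ∀ e' ∈ p ⁻¹' {x₀}, e ≠ e' → Disjoint (X e) (X e')) ∧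
    (∀ e ∈ p ⁻¹' {x₀}, ∀ γ ∈ X e, X e = pathComponent γ) ∧
    (⋃ e ∈ p ⁻¹' {x₀}, X e) = Set.univ ∧
    (∀ e ∈ p ⁻¹' {x₀}, Nonempty (ContinuousMap.HomotopyEquiv ↥(X e) (Path e₀ e₀))) ∧
    Nonempty ((p ⁻¹' {x₀}) ≃ {C : Set (Path x₀ x₀) | ∃ γ : Path x₀ x₀, C = pathComponent γ}) := by
  classical
  -- a global choice of lifts
  have exLift : ∀ γ : Path x₀ x₀, ∃ g : I → E, Continuous g ∧ g 0 = e₀ ∧ ∀ u, p (g u) = γ u := by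
    intro γ
    obtain ⟨N, hNo, hγN, Λ, hΛc, hΛp⟩ := LoopCoverAux.key hp hx₀ γ
    refine ⟨fun u => Λ (γ, u), ?_, (hΛp γ hγN).1, (hΛp γ hγN).2⟩
    rw [← continuousOn_univ]
    exact hΛc.comp ((continuous_const.prodMk continuous_id).continuousOn)
      (fun u _ => ⟨hγN, trivial⟩)
  choose L hLc hL0 hLp using exLift
  have lift_eq : ∀ (γ : Path x₀ x₀) (g : I → E), Continuous g → g 0 = e₀ →
      (∀ u, p (g u) = γ u) → g = L γ := by
    intro γ g hg h0 hpg
    exact hp.eq_of_comp_eq hg (hLc γ) (funext fun u => (hpg u).trans (hLp γ u).symm) 0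
      (h0.trans (hL0 γ).symm)
  have hLcont : Continuous fun q : Path x₀ x₀ × I => L q.1 q.2 := by
    rw [continuous_iff_continuousAt]
    rintro ⟨γ₀, u₀⟩
    obtain ⟨N, hNo, hγN, Λ, hΛc, hΛp⟩ := LoopCoverAux.key hp hx₀ γ₀
    have hmem : N ×ˢ (univ : Set I) ∈ nhds (γ₀, u₀) :=
      (hNo.prod isOpen_univ).mem_nhds ⟨hγN, trivial⟩
    have heq : ∀ q ∈ N ×ˢ (univ : Set I), L q.1 q.2 = Λ q := by
      rintro ⟨γ, u⟩ ⟨hγ, -⟩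
      have hcg : Continuous fun v : I => Λ (γ, v) := by
        rw [← continuousOn_univ]
        exact hΛc.comp ((continuous_const.prodMk continuous_id).continuousOn)
          (fun v _ => ⟨hγ, trivial⟩)
      have h := lift_eq γ (fun v => Λ (γ, v)) hcg (hΛp γ hγ).1 (hΛp γ hγ).2
      exact (congrFun h u).symm
    exact (hΛc.continuousAt hmem).congr
      (Filter.eventuallyEq_of_mem hmem (fun q hq => (heq q hq).symm))
  have hmemX : ∀ (γ : Path x₀ x₀) (e : E), γ ∈ X e ↔ L γ 1 = e := by
    intro γ e
    rw [hX e]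
    constructor
    · rintro ⟨γt, hγt⟩
      have h := lift_eq γ γt γt.continuous γt.source hγt
      calc L γ 1 = γt 1 := (congrFun h 1).symm
        _ = e := γt.target
    · intro h
      exact ⟨⟨⟨L γ, hLc γ⟩, hL0 γ, h⟩, fun t => hLp γ t⟩
  have hfib : ∀ γ : Path x₀ x₀, L γ 1 ∈ p ⁻¹' {x₀} := by
    intro γ
    simp only [mem_preimage, mem_singleton_iff, hLp γ 1, γ.target]
  haveI hdisc : DiscreteTopology ↥(p ⁻¹' {x₀}) := (hp x₀).1
  have hΦcont : Continuous fun γ : Path x₀ x₀ => (⟨L γ 1, hfib γ⟩ : ↥(p ⁻¹' {x₀})) :=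
    (hLcont.comp (continuous_id.prodMk continuous_const)).subtype_mk _
  have part1 : ∀ e ∈ p ⁻¹' {x₀}, (X e).Nonempty := by
    intro e he
    have hpe : p e = x₀ := he
    obtain ⟨α⟩ := PathConnectedSpace.joined e₀ e
    refine ⟨(α.map hp.continuous).cast hx₀.symm hpe.symm, ?_⟩
    rw [hX e]
    exact ⟨α, fun t => rfl⟩
  have part2 : ∀ e ∈ p ⁻¹' {x₀}, ∀ e' ∈ p ⁻¹' {x₀}, e ≠ e' → Disjoint (X e) (X e') := by
    intro e _ e' _ hne
    rw [Set.disjoint_left]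
    intro γ hγ hγ'
    exact hne (((hmemX γ e).mp hγ).symm.trans ((hmemX γ e').mp hγ'))
  have part3 : ∀ e ∈ p ⁻¹' {x₀}, ∀ γ ∈ X e, X e = pathComponent γ := by
    intro e he γ hγ
    have hpe : p e = x₀ := he
    apply Subset.antisymm
    · intro γ' hγ'
      rw [hX e] at hγ hγ'
      obtain ⟨γt, hγt⟩ := hγ
      obtain ⟨γt', hγt'⟩ := hγ'
      obtain ⟨F⟩ := SimplyConnectedSpace.paths_homotopic γt γt'
      have hj : Joined γ γ' := by
        have hcontF : ∀ s : I, Continuous fun t => p (F (s, t)) := fun s =>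
          hp.continuous.comp (F.continuous.comp (Continuous.prodMk_right s))
        refine ⟨⟨⟨fun s => Path.mk ⟨fun t => p (F (s, t)), hcontF s⟩
          (by show p (F (s, 0)) = x₀; rw [Path.Homotopy.source]; exact hx₀)
          (by show p (F (s, 1)) = x₀; rw [Path.Homotopy.target]; exact hpe), ?_⟩, ?_, ?_⟩⟩
        · exact Path.continuous_uncurry_iff.mp (hp.continuous.comp F.continuous)
        · ext t
          show p (F (0, t)) = γ t
          rw [F.apply_zero]
          exact hγt t
        · ext t
          show p (F (1, t)) = γ' t
          rw [F.apply_one]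
          exact hγt' t
      exact hj
    · intro γ' hγ'
      have hj : Joined γ γ' := hγ'
      obtain ⟨q⟩ := hj
      have hc : Continuous fun s : I => (⟨L (q s) 1, hfib (q s)⟩ : ↥(p ⁻¹' {x₀})) :=
        hΦcont.comp q.continuous
      have hconst := PreconnectedSpace.constant (inferInstance : PreconnectedSpace I) hc
        (x := 0) (y := 1)
      simp only [q.source, q.target] at hconst
      have hL1 : L γ' 1 = e := by
        have h1 : L γ 1 = e := (hmemX γ e).mp hγ
        have h2 := congrArg Subtype.val hconst
        simp only at h2
        rw [← h2]
        exact h1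
      exact (hmemX γ' e).mpr hL1
  have part4 : (⋃ e ∈ p ⁻¹' {x₀}, X e) = univ := by
    apply eq_univ_of_forall
    intro γ
    exact mem_iUnion₂.mpr ⟨L γ 1, hfib γ, (hmemX γ (L γ 1)).mpr rfl⟩
  have part5 : ∀ e ∈ p ⁻¹' {x₀}, Nonempty (ContinuousMap.HomotopyEquiv ↥(X e) (Path e₀ e₀)) := by
    intro e he
    have hpe : p e = x₀ := he
    have homeo : ↥(X e) ≃ₜ Path e₀ e := {
      toFun := fun γ => ⟨⟨L γ.1, hLc γ.1⟩, hL0 γ.1, (hmemX γ.1 e).mp γ.2⟩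
      invFun := fun δ => ⟨(δ.map hp.continuous).cast hx₀.symm hpe.symm,
        by rw [hX e]; exact ⟨δ, fun t => rfl⟩⟩
      left_inv := by
        intro γ
        apply Subtype.ext
        ext t
        show p (L γ.1 t) = γ.1 t
        exact hLp γ.1 t
      right_inv := by
        intro δ
        ext t
        show L ((δ.map hp.continuous).cast hx₀.symm hpe.symm) t = δ t
        have h := lift_eq ((δ.map hp.continuous).cast hx₀.symm hpe.symm) δ δ.continuous
          δ.source (fun u => rfl)
        exact (congrFun h t).symm
      continuous_toFun := by
        apply Path.continuous_uncurry_iff.mp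
        exact hLcont.comp ((continuous_subtype_val.comp continuous_fst).prodMk continuous_snd)
      continuous_invFun := by
        apply Continuous.subtype_mk
        apply Path.continuous_uncurry_iff.mp
        exact hp.continuous.comp (continuous_fst.eval continuous_snd) }
    exact ⟨homeo.toHomotopyEquiv.trans
      (LoopCoverAux.pathTransEquiv ((PathConnectedSpace.joined e e₀).somePath) e₀)⟩
  refine ⟨part1, part2, part3, part4, part5, ?_⟩
  have hXset : ∀ e : ↥(p ⁻¹' {x₀}),
      X e.1 ∈ {C : Set (Path x₀ x₀) | ∃ γ : Path x₀ x₀, C = pathComponent γ} := by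
    intro e
    obtain ⟨γ, hγ⟩ := part1 e.1 e.2
    exact ⟨γ, part3 e.1 e.2 γ hγ⟩
  refine ⟨Equiv.ofBijective (fun e => ⟨X e.1, hXset e⟩) ⟨?_, ?_⟩⟩
  · intro e e' h
    have hXe : X e.1 = X e'.1 := congrArg Subtype.val h
    by_contra hne
    have hne' : e.1 ≠ e'.1 := fun hh => hne (Subtype.ext hh)
    obtain ⟨γ, hγ⟩ := part1 e.1 e.2
    exact Set.disjoint_left.mp (part2 e.1 e.2 e'.1 e'.2 hne') hγ (hXe ▸ hγ)
  · rintro ⟨C, γ, hC⟩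
    refine ⟨⟨L γ 1, hfib γ⟩, ?_⟩
    apply Subtype.ext
    show X (L γ 1) = C
    rw [hC]
    exact part3 (L γ 1) (hfib γ) γ ((hmemX γ (L γ 1)).mpr rfl)
end
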